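/- Let q, N ∈ ℕ, B ≥ 1, and for each n = 1, …, N let σ_n be a polynomial of degree at most q all of whose coefficients lie in [−B, B], let b_n ∈ [−B, B], a_n ∈ ℝ, and let w_n ∈ ℝ^d be a unit vector. Let θ ∈ ℝ^d be a unit vector and ε ∈ (0, 1/2] with |w_nᵀθ| ≥ 1 − ε for all n. Let V ⊆ ℝ^d be a subspace with θ ⟂ V, and let P_V be the orthogonal projection onto V. Define f(x) = N^{−1} Σ_{n=1}^{N} a_n σ_n(w_nᵀx + b_n). Then there exists a constant C depending only on q and B such that E_{x∼N(0,I_d)}[|f(P_V x)|] ≤ N^{−1} Σ_{n=1}^{N} |a_n| |σ_n(b_n)| + C N^{−1} (Σ_{n=1}^{N} |a_n|) √ε. -/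

import Mathlib

open MeasureTheory ProbabilityTheory
open scoped RealInnerProductSpace BigOperators

/-- The standard Gaussian measure `N(0, I_d)` on `ℝ^d` (as `EuclideanSpace ℝ (Fin d)`). -/
noncomputable def stdGaussian (d : ℕ) : Measure (EuclideanSpace ℝ (Fin d)) :=
  Measure.map (⇑(EuclideanSpace.equiv (Fin d) ℝ).symm)
    (Measure.pi fun _ : Fin d => gaussianReal 0 1)

/-- Orthogonal projection onto a subspace `V ⊆ ℝ^d`, viewed as a map `ℝ^d → ℝ^d`. -/
noncomputable def projV {d : ℕ} (V : Submodule ℝ (EuclideanSpace ℝ (Fin d)))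
    (x : EuclideanSpace ℝ (Fin d)) : EuclideanSpace ℝ (Fin d) :=
  (Submodule.orthogonalProjectionOnto V x : EuclideanSpace ℝ (Fin d))

/-- The two-layer network `f(x) = N⁻¹ Σ_n a_n σ_n(w_nᵀx + b_n)`. -/
noncomputable def net {d N : ℕ} (σ : Fin N → Polynomial ℝ) (a b : Fin N → ℝ)
    (w : Fin N → EuclideanSpace ℝ (Fin d)) (x : EuclideanSpace ℝ (Fin d)) : ℝ :=
  (N : ℝ)⁻¹ * ∑ n, a n * (σ n).eval (⟪w n, x⟫ + b n)

/-!
Since `w_n` is `ε`-close to `±θ` and `θ ⟂ V`, the projection `v_n = P_V w_n` has norm at most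
`√(2ε)`. Under the standard Gaussian, `⟪v_n, x⟫` is distributed as `‖v_n‖ Z` with `Z ~ N(0, 1)`,
and for a polynomial with bounded coefficients `|σ(t + b) - σ(b)| ≤ K |t| (1 + |t|)^q`; hence
`E |σ_n(⟪v_n, x⟫ + b_n)| ≤ |σ_n(b_n)| + K E[|Z| (1 + |Z|)^q] ‖v_n‖`. The triangle inequality over
the neurons finishes the proof.
-/

open Polynomial

theorem abs_add_pow_sub_pow_le (t b : ℝ) (k : ℕ) :
    |(t + b) ^ k - b ^ k| ≤ k * |t| * (|t| + |b|) ^ (k - 1) := by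
  have hmax : max |t + b| |b| ≤ |t| + |b| :=
    max_le (abs_add_le t b) (le_add_of_nonneg_left (abs_nonneg t))
  calc |(t + b) ^ k - b ^ k| ≤ |t + b - b| * k * max |t + b| |b| ^ (k - 1) :=
        abs_pow_sub_pow_le _ _ _
    _ ≤ k * |t| * (|t| + |b|) ^ (k - 1) := by
        rw [add_sub_cancel_right, mul_comm |t|]
        gcongr

theorem Polynomial.abs_eval_add_sub_eval_le {σ : ℝ[X]} {q : ℕ} {B : ℝ} (hB : 1 ≤ B)
    (hdeg : σ.natDegree ≤ q) (hcoef : ∀ k, |σ.coeff k| ≤ B) {b : ℝ} (hb : |b| ≤ B) (t : ℝ) :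
    |σ.eval (t + b) - σ.eval b| ≤ (q + 1) * q * B ^ (q + 1) * (|t| * (1 + |t|) ^ q) := by
  have hσ : ∀ y, σ.eval y = ∑ k ∈ Finset.range (q + 1), σ.coeff k * y ^ k :=
    eval_eq_sum_range' (Nat.lt_succ_of_le hdeg)
  have hterm : ∀ k ∈ Finset.range (q + 1),
      |σ.coeff k * ((t + b) ^ k - b ^ k)| ≤ q * B ^ (q + 1) * (|t| * (1 + |t|) ^ q) := by
    intro k hk
    have hkq : k ≤ q := Nat.lt_succ_iff.mp (Finset.mem_range.mp hk)
    have hbase : |t| + |b| ≤ B * (1 + |t|) := by nlinarith [abs_nonneg t]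
    have hpow : (|t| + |b|) ^ (k - 1) ≤ (B * (1 + |t|)) ^ q :=
      (pow_le_pow_left₀ (by positivity) hbase _).trans
        (pow_le_pow_right₀ (by nlinarith [abs_nonneg t]) (by omega))
    calc |σ.coeff k * ((t + b) ^ k - b ^ k)|
        ≤ B * (k * |t| * (|t| + |b|) ^ (k - 1)) := by
          rw [abs_mul]
          exact mul_le_mul (hcoef k) (abs_add_pow_sub_pow_le t b k) (abs_nonneg _) (by linarith)
      _ ≤ B * (q * |t| * (B * (1 + |t|)) ^ q) := by gcongr
      _ = q * B ^ (q + 1) * (|t| * (1 + |t|) ^ q) := by rw [mul_pow]; ring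
  calc |σ.eval (t + b) - σ.eval b|
      = |∑ k ∈ Finset.range (q + 1), σ.coeff k * ((t + b) ^ k - b ^ k)| := by
        simp only [hσ, mul_sub, Finset.sum_sub_distrib]
    _ ≤ ∑ k ∈ Finset.range (q + 1), q * B ^ (q + 1) * (|t| * (1 + |t|) ^ q) :=
        (Finset.abs_sum_le_sum_abs _ _).trans (Finset.sum_le_sum hterm)
    _ = (q + 1) * q * B ^ (q + 1) * (|t| * (1 + |t|) ^ q) := by
        rw [Finset.sum_const, Finset.card_range, nsmul_eq_mul]
        push_cast
        ring

theorem integrable_abs_mul_one_add_abs_pow_gaussianReal (m : ℝ) (v : NNReal) (q : ℕ) :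
    Integrable (fun z : ℝ => |z| * (1 + |z|) ^ q) (gaussianReal m v) := by
  have hid : MemLp id ((q + 1 : ℕ) : ENNReal) (gaussianReal m v) :=
    memLp_id_gaussianReal' _ (ENNReal.natCast_ne_top _)
  have hLp := ((memLp_const (μ := gaussianReal m v) (1 : ℝ)).add hid.norm).integrable_norm_pow
    (Nat.succ_ne_zero q)
  refine hLp.mono' (by fun_prop) (ae_of_all _ fun z => ?_)
  simp only [Pi.add_apply, id, Real.norm_eq_abs, abs_mul, abs_abs, abs_pow]
  rw [abs_of_nonneg (by positivity : 0 ≤ 1 + |z|), pow_succ']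
  gcongr
  linarith

noncomputable def neuronConst (q : ℕ) (B : ℝ) : ℝ :=
  (q + 1) * q * B ^ (q + 1) * ∫ z, |z| * (1 + |z|) ^ q ∂gaussianReal 0 1

theorem neuronConst_nonneg (q : ℕ) {B : ℝ} (hB : 0 ≤ B) : 0 ≤ neuronConst q B :=
  mul_nonneg (by positivity) (integral_nonneg fun z => by positivity)

theorem integral_abs_eval_mul_add_le {σ : ℝ[X]} {q : ℕ} {B : ℝ} (hB : 1 ≤ B)
    (hdeg : σ.natDegree ≤ q) (hcoef : ∀ k, |σ.coeff k| ≤ B) {b : ℝ} (hb : |b| ≤ B)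
    {s : ℝ} (hs0 : 0 ≤ s) (hs1 : s ≤ 1) :
    Integrable (fun z => |σ.eval (s * z + b)|) (gaussianReal 0 1) ∧
      ∫ z, |σ.eval (s * z + b)| ∂gaussianReal 0 1 ≤ |σ.eval b| + neuronConst q B * s := by
  set K : ℝ := (q + 1) * q * B ^ (q + 1)
  have hK : 0 ≤ K := by
    have : 0 ≤ B := by linarith
    positivity
  have hmom := integrable_abs_mul_one_add_abs_pow_gaussianReal 0 1 q
  have hbound : Integrable (fun z => |σ.eval b| + K * s * (|z| * (1 + |z|) ^ q))
      (gaussianReal 0 1) :=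
    (integrable_const _).add (hmom.const_mul _)
  have hpt z : |σ.eval (s * z + b)| ≤ |σ.eval b| + K * s * (|z| * (1 + |z|) ^ q) := by
    have hscale : |s * z| * (1 + |s * z|) ^ q ≤ s * (|z| * (1 + |z|) ^ q) := by
      rw [abs_mul, abs_of_nonneg hs0, mul_assoc]
      gcongr
      nlinarith [abs_nonneg z]
    have hshift := (abs_sub_abs_le_abs_sub _ _).trans
      (σ.abs_eval_add_sub_eval_le hB hdeg hcoef hb (s * z))
    nlinarith
  have hint : Integrable (fun z => |σ.eval (s * z + b)|) (gaussianReal 0 1) :=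
    hbound.mono' (by fun_prop) (ae_of_all _ fun z => by simpa using hpt z)
  refine ⟨hint, (integral_mono hint hbound hpt).trans_eq ?_⟩
  rw [integral_add (integrable_const _) (hmom.const_mul _), integral_const_mul, neuronConst]
  simp only [integral_const, probReal_univ, smul_eq_mul, one_mul]
  ring

section StdGaussian

variable {E : Type*} [NormedAddCommGroup E] [InnerProductSpace ℝ E] [FiniteDimensional ℝ E]
  [MeasurableSpace E] [BorelSpace E]

theorem map_inner_stdGaussian (v : E) :
    (ProbabilityTheory.stdGaussian E).map (⟪v, ·⟫) = (gaussianReal 0 1).map (‖v‖ * ·) := by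
  rw [gaussianReal_map_const_mul, mul_zero, mul_one, ← Real.toNNReal_of_nonneg (sq_nonneg _)]
  change (ProbabilityTheory.stdGaussian E).map (innerSL ℝ v) = _
  rw [IsGaussian.map_eq_gaussianReal, integral_strongDual_stdGaussian, variance_dual_stdGaussian,
    innerSL_apply_norm]

theorem integrable_comp_inner_stdGaussian_iff (v : E) {g : ℝ → ℝ} (hg : Measurable g) :
    Integrable (fun x => g ⟪v, x⟫) (ProbabilityTheory.stdGaussian E) ↔
      Integrable (fun z => g (‖v‖ * z)) (gaussianReal 0 1) := by
  have hmap := integrable_map_measure (μ := ProbabilityTheory.stdGaussian E)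
    hg.aestronglyMeasurable (f := (⟪v, ·⟫)) (by fun_prop)
  rw [map_inner_stdGaussian, integrable_map_measure hg.aestronglyMeasurable (by fun_prop)] at hmap
  exact hmap.symm

theorem integral_comp_inner_stdGaussian (v : E) {g : ℝ → ℝ} (hg : Measurable g) :
    ∫ x, g ⟪v, x⟫ ∂(ProbabilityTheory.stdGaussian E) = ∫ z, g (‖v‖ * z) ∂gaussianReal 0 1 := by
  rw [← integral_map (by fun_prop) hg.aestronglyMeasurable, map_inner_stdGaussian,
    integral_map (by fun_prop) hg.aestronglyMeasurable]

theorem integral_abs_eval_inner_add_le {σ : ℝ[X]} {q : ℕ} {B : ℝ} (hB : 1 ≤ B)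
    (hdeg : σ.natDegree ≤ q) (hcoef : ∀ k, |σ.coeff k| ≤ B) {b : ℝ} (hb : |b| ≤ B)
    {v : E} (hv : ‖v‖ ≤ 1) :
    Integrable (fun x => |σ.eval (⟪v, x⟫ + b)|) (ProbabilityTheory.stdGaussian E) ∧
      ∫ x, |σ.eval (⟪v, x⟫ + b)| ∂(ProbabilityTheory.stdGaussian E) ≤
        |σ.eval b| + neuronConst q B * ‖v‖ := by
  have hg : Measurable fun t => |σ.eval (t + b)| := by fun_prop
  obtain ⟨hint, hle⟩ := integral_abs_eval_mul_add_le hB hdeg hcoef hb (norm_nonneg v) hv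
  exact ⟨(integrable_comp_inner_stdGaussian_iff v hg).2 hint,
    (integral_comp_inner_stdGaussian v hg).trans_le hle⟩

end StdGaussian

theorem integral_abs_net_le {d N q : ℕ} {B s : ℝ} (hB : 1 ≤ B) (σ : Fin N → ℝ[X])
    (hdeg : ∀ n, (σ n).natDegree ≤ q) (hcoef : ∀ n k, |(σ n).coeff k| ≤ B)
    (b : Fin N → ℝ) (hb : ∀ n, |b n| ≤ B) (a : Fin N → ℝ)
    (v : Fin N → EuclideanSpace ℝ (Fin d)) (hv : ∀ n, ‖v n‖ ≤ s) (hs : s ≤ 1) :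
    ∫ x, |net σ a b v x| ∂(ProbabilityTheory.stdGaussian _) ≤
      (N : ℝ)⁻¹ * (∑ n, |a n| * |(σ n).eval (b n)|)
        + neuronConst q B * (N : ℝ)⁻¹ * (∑ n, |a n|) * s := by
  have hneuron n :=
    integral_abs_eval_inner_add_le hB (hdeg n) (hcoef n) (hb n) ((hv n).trans hs)
  have hint n : Integrable (fun x => |a n| * |(σ n).eval (⟪v n, x⟫ + b n)|)
      (ProbabilityTheory.stdGaussian _) :=
    (hneuron n).1.const_mul _
  have hc := neuronConst_nonneg q (zero_le_one.trans hB)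
  calc ∫ x, |net σ a b v x| ∂(ProbabilityTheory.stdGaussian _)
      ≤ ∫ x, (N : ℝ)⁻¹ * ∑ n, |a n| * |(σ n).eval (⟪v n, x⟫ + b n)|
          ∂(ProbabilityTheory.stdGaussian _) := by
        refine integral_mono_of_nonneg (ae_of_all _ fun x => abs_nonneg _)
          ((integrable_finsetSum _ fun n _ => hint n).const_mul _) (ae_of_all _ fun x => ?_)
        simp only [net]
        rw [abs_mul, abs_of_nonneg (by positivity)]
        gcongr
        exact (Finset.abs_sum_le_sum_abs _ _).trans_eq (by simp only [abs_mul])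
    _ = (N : ℝ)⁻¹ * ∑ n, |a n| * ∫ x, |(σ n).eval (⟪v n, x⟫ + b n)|
          ∂(ProbabilityTheory.stdGaussian _) := by
        rw [integral_const_mul, integral_finsetSum _ fun n _ => hint n]
        simp only [integral_const_mul]
    _ ≤ (N : ℝ)⁻¹ * ∑ n, |a n| * (|(σ n).eval (b n)| + neuronConst q B * s) := by
        gcongr with n
        exact (hneuron n).2.trans (by gcongr; exact hv n)
    _ = _ := by
        simp only [mul_add, Finset.sum_add_distrib, ← Finset.sum_mul]
        ring

theorem sq_norm_starProjection_add_sq_inner_le {E : Type*} [NormedAddCommGroup E]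
    [InnerProductSpace ℝ E] (V : Submodule ℝ E) [V.HasOrthogonalProjection] {θ : E}
    (hθ : ‖θ‖ = 1) (hθV : θ ∈ Vᗮ) (w : E) :
    ‖V.starProjection w‖ ^ 2 + ⟪w, θ⟫ ^ 2 ≤ ‖w‖ ^ 2 := by
  have hinner : ⟪w, θ⟫ = ⟪Vᗮ.starProjection w, θ⟫ := by
    rw [Vᗮ.inner_starProjection_left_eq_right, Vᗮ.starProjection_eq_self_iff.mpr hθV]
  have hcs : |⟪w, θ⟫| ≤ ‖Vᗮ.starProjection w‖ := by
    simpa only [hinner, hθ, mul_one] using abs_real_inner_le_norm (Vᗮ.starProjection w) θ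
  rw [V.norm_sq_eq_add_norm_sq_starProjection w, ← sq_abs ⟪w, θ⟫]
  gcongr

theorem norm_starProjection_le_sqrt {E : Type*} [NormedAddCommGroup E]
    [InnerProductSpace ℝ E] (V : Submodule ℝ E) [V.HasOrthogonalProjection] {θ : E}
    (hθ : ‖θ‖ = 1) (hθV : θ ∈ Vᗮ) {w : E} (hw : ‖w‖ = 1) {ε : ℝ} (hε : ε ≤ 1)
    (hwθ : 1 - ε ≤ |⟪w, θ⟫|) :
    ‖V.starProjection w‖ ≤ √(2 * ε) := by
  have h := sq_norm_starProjection_add_sq_inner_le V hθ hθV w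
  have h1 : (1 - ε) ^ 2 ≤ ⟪w, θ⟫ ^ 2 := by
    rw [← sq_abs ⟪w, θ⟫]
    exact pow_le_pow_left₀ (by linarith) hwθ 2
  apply Real.le_sqrt_of_sq_le
  rw [hw] at h
  nlinarith

theorem stdGaussian_eq_stdGaussian_euclideanSpace (d : ℕ) :
    _root_.stdGaussian d = ProbabilityTheory.stdGaussian (EuclideanSpace ℝ (Fin d)) :=
  map_pi_eq_stdGaussian

theorem net_projV {d N : ℕ} (σ : Fin N → ℝ[X]) (a b : Fin N → ℝ)
    (w : Fin N → EuclideanSpace ℝ (Fin d)) (V : Submodule ℝ (EuclideanSpace ℝ (Fin d)))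
    (x : EuclideanSpace ℝ (Fin d)) :
    net σ a b w (projV V x) = net σ a b (fun n => projV V (w n)) x := by
  simp only [net, projV, ← Submodule.starProjection_apply, V.inner_starProjection_left_eq_right]

/-- If every neuron direction `w_n` is `ε`-aligned with a common unit
direction `θ` orthogonal to the subspace `V`, then the Gaussian `L¹` norm of the network
restricted to `V` is at most `N⁻¹ Σ_n |a_n| |σ_n(b_n)| + C N⁻¹ (Σ_n |a_n|) √ε`, where `C`
depends only on the degree bound `q` and the coefficient bound `B`. -/
theorem network_restriction_L1_theta_perp_V (q : ℕ) (B : ℝ) (hB : 1 ≤ B) :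
    ∃ C : ℝ, ∀ (d N : ℕ) (σ : Fin N → Polynomial ℝ),
      (∀ n, (σ n).natDegree ≤ q) → (∀ n k, |(σ n).coeff k| ≤ B) →
      ∀ b : Fin N → ℝ, (∀ n, |b n| ≤ B) →
      ∀ (a : Fin N → ℝ) (w : Fin N → EuclideanSpace ℝ (Fin d)), (∀ n, ‖w n‖ = 1) →
      ∀ θ : EuclideanSpace ℝ (Fin d), ‖θ‖ = 1 →
      ∀ ε : ℝ, 0 < ε → ε ≤ 1 / 2 → (∀ n, 1 - ε ≤ |⟪w n, θ⟫|) →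
      ∀ V : Submodule ℝ (EuclideanSpace ℝ (Fin d)), θ ∈ Vᗮ →
        (∫ x, |net σ a b w (projV V x)| ∂(stdGaussian d))
          ≤ (N : ℝ)⁻¹ * (∑ n, |a n| * |(σ n).eval (b n)|)
            + C * (N : ℝ)⁻¹ * (∑ n, |a n|) * Real.sqrt ε := by
  refine ⟨neuronConst q B * √2, ?_⟩
  intro d N σ hdeg hcoef b hb a w hw θ hθ ε _ hε hwθ V hθV
  have hv n : ‖projV V (w n)‖ ≤ √(2 * ε) :=
    norm_starProjection_le_sqrt V hθ hθV (hw n) (by linarith) (hwθ n)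
  have hs : √(2 * ε) ≤ 1 := Real.sqrt_le_one.mpr (by linarith)
  simp only [stdGaussian_eq_stdGaussian_euclideanSpace, net_projV]
  refine (integral_abs_net_le hB σ hdeg hcoef b hb a _ hv hs).trans_eq ?_
  rw [Real.sqrt_mul zero_le_two]
  ring
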